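/- Let M, a, s be positive integers with M > 1 such that ∑_{i=0}^{M-1} (a+i)^2 = s^2. If M = 24·m₁ + 9 for a nonnegative integer m₁, then for every integer i ≥ 1 one has m₁ ≢ 3·(3^(2i-2) − 1)/8 (mod 3^(2i)) and m₁ ≢ 2·3^(2i-1) + 3·(3^(2i-2) − 1)/8 (mod 3^(2i)). (For i ≥ 1, 3^(2i-2) − 1 = 9^(i-1) − 1 is divisible by 8, so these residues are integers.) -/

import Mathlib

/-!
Summing the squares gives `6 s² = M · T` with `T = 6a² + 6a(M-1) + (M-1)(2M-1)`, and `T ≡ 1 (mod 3)`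
as soon as `3 ∣ M`. Comparing `3`-adic valuations, `v₃(M) = 1 + 2 v₃(s)` is odd. For
`M = 3(8m₁ + 3)` the two excluded classes of `m₁` are exactly those with
`8m₁ + 3 ≡ u · 3^(2i-1) (mod 3^(2i))`, `u ∈ {1, 17}`, which force `v₃(M) = 2i`.
-/

open Finset

lemma six_mul_sum_range_succ_sq (a n : ℕ) :
    6 * ∑ i ∈ range (n + 1), (a + i) ^ 2 = (n + 1) * (6 * a ^ 2 + 6 * a * n + n * (2 * n + 1)) := by
  induction n with
  | zero => simp
  | succ n ih =>
    rw [sum_range_succ, mul_add, ih]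
    ring

lemma padicValNat_eq_of_modEq_mul_pow {p n u k : ℕ} [Fact p.Prime] (hu : ¬ p ∣ u)
    (h : n ≡ u * p ^ k [MOD p ^ (k + 1)]) : padicValNat p n = k := by
  have hdvd : p ^ k ∣ n := (h.dvd_iff (pow_dvd_pow p k.le_succ)).2 (dvd_mul_left _ _)
  have hndvd : ¬ p ^ (k + 1) ∣ n := by
    rw [h.dvd_iff dvd_rfl, pow_succ, mul_comm _ p,
      Nat.mul_dvd_mul_iff_right (pow_pos (Fact.out : p.Prime).pos k)]
    exact hu
  have hn : n ≠ 0 := by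
    rintro rfl
    exact hndvd (dvd_zero _)
  have hle := (padicValNat_dvd_iff_le hn).1 hdvd
  have hlt := (padicValNat_dvd_iff_le hn).not.1 hndvd
  omega

lemma odd_padicValNat_three_of_six_mul_sq_eq {s M T : ℕ} (hs : s ≠ 0) (hT : ¬ 3 ∣ T)
    (h : 6 * s ^ 2 = M * T) : Odd (padicValNat 3 M) := by
  have hM : M ≠ 0 := by
    rintro rfl
    simp [hs] at h
  have hT0 : T ≠ 0 := by
    rintro rfl
    exact hT (dvd_zero 3)
  have hval := congrArg (padicValNat 3) h
  rw [padicValNat.mul (by norm_num) (pow_ne_zero 2 hs), padicValNat.pow,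
    padicValNat.mul hM hT0, padicValNat.eq_zero_of_not_dvd hT,
    show (6 : ℕ) = 3 * 2 by rfl, padicValNat.mul (by norm_num) (by norm_num),
    padicValNat.self (by norm_num), padicValNat.eq_zero_of_not_dvd (by norm_num)] at hval
  exact ⟨padicValNat 3 s, by omega⟩

lemma odd_padicValNat_three_of_sum_range_sq_eq_sq {M a s : ℕ} (h3 : 3 ∣ M) (hs : s ≠ 0)
    (hsum : ∑ i ∈ range M, (a + i) ^ 2 = s ^ 2) : Odd (padicValNat 3 M) := by
  obtain ⟨j, rfl⟩ := h3
  obtain ⟨k, rfl⟩ : ∃ k, j = k + 1 := by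
    refine Nat.exists_eq_succ_of_ne_zero ?_
    rintro rfl
    rw [mul_zero, range_zero, sum_empty] at hsum
    exact hs ((pow_eq_zero_iff two_ne_zero).1 hsum.symm)
  set n := 3 * k + 2
  have hT : ¬ 3 ∣ 6 * a ^ 2 + 6 * a * n + n * (2 * n + 1) := by
    rw [show 6 * a ^ 2 + 6 * a * n + n * (2 * n + 1)
        = 3 * (2 * a ^ 2 + 2 * a * n + 6 * k ^ 2 + 9 * k + 3) + 1 by ring]
    omega
  refine odd_padicValNat_three_of_six_mul_sq_eq hs hT ?_
  rw [← hsum, show 3 * (k + 1) = n + 1 by ring, six_mul_sum_range_succ_sq]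

lemma eight_mul_three_mul_pow_sub_one_div_eight_add_three (k : ℕ) :
    8 * (3 * (3 ^ (2 * k) - 1) / 8) + 3 = 3 ^ (2 * k + 1) := by
  obtain ⟨q, hq⟩ : 8 ∣ 3 ^ (2 * k) - 1 := by
    simpa [pow_mul] using Nat.sub_dvd_pow_sub_pow 9 1 k
  have hpos : 1 ≤ 3 ^ (2 * k) := Nat.one_le_pow _ _ (by norm_num)
  rw [hq, show 3 * (8 * q) = 8 * (3 * q) by ring, Nat.mul_div_cancel_left _ (by norm_num),
    pow_succ]
  omega

theorem stmt_general (M a s m₁ : ℕ) (hs : 1 ≤ s)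
    (hsum : ∑ i ∈ Finset.range M, (a + i) ^ 2 = s ^ 2)
    (hMeq : M = 24 * m₁ + 9) :
    ∀ i : ℕ, 1 ≤ i →
      ¬ m₁ ≡ 3 * (3 ^ (2 * i - 2) - 1) / 8 [MOD 3 ^ (2 * i)] ∧
      ¬ m₁ ≡ 2 * 3 ^ (2 * i - 1) + 3 * (3 ^ (2 * i - 2) - 1) / 8 [MOD 3 ^ (2 * i)] := by
  intro i hi
  obtain ⟨k, rfl⟩ := Nat.exists_eq_add_of_le' hi
  rw [show 2 * (k + 1) - 2 = 2 * k by omega, show 2 * (k + 1) - 1 = 2 * k + 1 by omega,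
    show 2 * (k + 1) = 2 * k + 1 + 1 by ring]
  have hodd : Odd (padicValNat 3 M) :=
    odd_padicValNat_three_of_sum_range_sq_eq_sq ⟨8 * m₁ + 3, by omega⟩ (by omega) hsum
  have hval : padicValNat 3 M = padicValNat 3 (8 * m₁ + 3) + 1 := by
    rw [hMeq, show 24 * m₁ + 9 = 3 * (8 * m₁ + 3) by ring, padicValNat.mul (by norm_num) (by omega),
      padicValNat.self (by norm_num), add_comm]
  have hexcluded : ∀ c u, ¬ 3 ∣ u → 8 * c + 3 ≡ u * 3 ^ (2 * k + 1) [MOD 3 ^ (2 * k + 1 + 1)] →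
      ¬ m₁ ≡ c [MOD 3 ^ (2 * k + 1 + 1)] := by
    intro c u hu hc hm
    rw [hval, padicValNat_eq_of_modEq_mul_pow hu (((hm.mul_left 8).add_right 3).trans hc)] at hodd
    exact Nat.not_odd_iff_even.2 ⟨k + 1, by ring⟩ hodd
  have hc := eight_mul_three_mul_pow_sub_one_div_eight_add_three k
  refine ⟨hexcluded _ 1 (by norm_num) (by rw [hc, one_mul]), hexcluded _ 17 (by norm_num) ?_⟩
  rw [show 8 * (2 * 3 ^ (2 * k + 1) + 3 * (3 ^ (2 * k) - 1) / 8) + 3 = 17 * 3 ^ (2 * k + 1) by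
    omega]

theorem stmt (M a s m₁ : ℕ) (hM : 1 < M) (ha : 1 ≤ a) (hs : 1 ≤ s)
    (hsum : ∑ i ∈ Finset.range M, (a + i) ^ 2 = s ^ 2)
    (hMeq : M = 24 * m₁ + 9) :
    ∀ i : ℕ, 1 ≤ i →
      ¬ m₁ ≡ 3 * (3 ^ (2 * i - 2) - 1) / 8 [MOD 3 ^ (2 * i)] ∧
      ¬ m₁ ≡ 2 * 3 ^ (2 * i - 1) + 3 * (3 ^ (2 * i - 2) - 1) / 8 [MOD 3 ^ (2 * i)] :=
  stmt_general M a s m₁ hs hsum hMeq
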